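/- Let δ = (x-(α+1))D - xD^2 and suppose δ(δ-1)(δ-2)⋯(δ-(n-1)) = Σ_{k=n}^{2n} q_k(x) D^k as operators on ℝ[x], where the q_k are polynomials. Then Σ_{k=n}^{2n} q_k(x) z^k = n!·(-1)^n·z^n·L_n^{(α)}(x - xz) as polynomials in x and z. -/

import Mathlib

open Polynomial

/-- The generalized Laguerre polynomial `L_n^{(α)}(x) = ∑_{k=0}^n binom(n+α, n-k) (-x)^k / k!`. -/
noncomputable def Laguerre (α : ℝ) (n : ℕ) : Polynomial ℝ :=
  ∑ k ∈ Finset.range (n + 1),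
    Polynomial.C ((∏ i ∈ Finset.range (n - k), ((n : ℝ) + α - i)) / (Nat.factorial (n - k)) *
      (-1) ^ k / (Nat.factorial k)) * Polynomial.X ^ k

/-- The operator `δ[p] = (x-(α+1))p' - x p''`. -/
noncomputable def laguerreDelta (α : ℝ) (p : Polynomial ℝ) : Polynomial ℝ :=
  (X - C (α + 1)) * derivative p - X * derivative (derivative p)

/-- The operator `(δ-(m-1))⋯(δ-1)δ` (which equals `δ(δ-1)⋯(δ-(m-1))` since the factors
commute). -/
noncomputable def laguerreDeltaFalling (α : ℝ) : ℕ → Polynomial ℝ → Polynomial ℝ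
  | 0, p => p
  | (m + 1), p =>
      laguerreDelta α (laguerreDeltaFalling α m p) - (m : ℝ) • laguerreDeltaFalling α m p

/-!
A polynomial differential operator `∑ q_k(x) D^k` is encoded by its symbol
`∑ q_k(x) z^k ∈ ℝ[x][z]`, and the encoding is injective: testing on `x^j`, for `j` the least
index with `q_j ≠ 0`, isolates `j! q_j`. Composing with `D` on the left acts on symbols by
`P ↦ ∂ₓP + zP`, so `δ` acts on symbols by an explicit second-order operator.
With `v = x - xz` one shows by induction on `m` that `m! (-1)^m z^m L_m(v)` is the symbol of
`δ(δ-1)⋯(δ-(m-1))`: since `∂ₓv = 1 - z`, the inductive step is the Laguerre equation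
`x L_m'' + (α+1-x) L_m' + m L_m = 0` combined with the recurrence
`(m+1) L_{m+1} = x L_m' + (m+α+1-x) L_m`, both evaluated at `v`.
-/

section OperatorSymbol

variable {R : Type*} [CommRing R]

noncomputable def coeffDerivative : Derivation R R[X][X] R[X][X] :=
  PolynomialModule.equivPolynomialSelf.toLinearMap.compDer derivative'.mapCoeffs

@[simp]
lemma coeff_coeffDerivative (P : R[X][X]) (k : ℕ) :
    (coeffDerivative P).coeff k = derivative (P.coeff k) := rfl

@[simp]
lemma coeffDerivative_X : coeffDerivative (X : R[X][X]) = 0 := by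
  ext k : 1
  simp only [coeff_coeffDerivative, coeff_X, coeff_zero]
  split_ifs <;> simp

@[simp]
lemma coeffDerivative_C (q : R[X]) : coeffDerivative (C q) = C (derivative q) := by
  ext k : 1
  simp only [coeff_coeffDerivative, coeff_C]
  split_ifs <;> simp

noncomputable def symbolApply (p : R[X]) : R[X][X] →ₗ[R[X]] R[X] :=
  lsum fun k => LinearMap.mulRight R[X] (derivative^[k] p)

lemma symbolApply_monomial (p : R[X]) (k : ℕ) (c : R[X]) :
    symbolApply p (monomial k c) = c * derivative^[k] p := by
  simp [symbolApply, sum_monomial_index]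

lemma symbolApply_C_mul_X_pow (p : R[X]) (k : ℕ) (c : R[X]) :
    symbolApply p (C c * X ^ k) = c * derivative^[k] p := by
  rw [C_mul_X_pow_eq_monomial, symbolApply_monomial]

lemma symbolApply_one (p : R[X]) : symbolApply p 1 = p := by
  simpa using symbolApply_C_mul_X_pow p 0 1

lemma symbolApply_C_mul (p c : R[X]) (P : R[X][X]) :
    symbolApply p (C c * P) = c * symbolApply p P := by
  rw [← smul_eq_C_mul, map_smul, smul_eq_mul]

noncomputable def derivativeSymbol (P : R[X][X]) : R[X][X] := coeffDerivative P + X * P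

lemma derivativeSymbol_add (P Q : R[X][X]) :
    derivativeSymbol (P + Q) = derivativeSymbol P + derivativeSymbol Q := by
  simp only [derivativeSymbol, map_add]; ring

lemma derivative_symbolApply (p : R[X]) (P : R[X][X]) :
    derivative (symbolApply p P) = symbolApply p (derivativeSymbol P) := by
  induction P using Polynomial.induction_on' with
  | add P Q hP hQ => rw [map_add, derivative_add, hP, hQ, derivativeSymbol_add, map_add]
  | monomial k c =>
    rw [derivativeSymbol, map_add, X_mul_monomial, symbolApply_monomial, symbolApply_monomial,
      ← C_mul_X_pow_eq_monomial, Derivation.leibniz, Derivation.leibniz_pow]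
    simp [derivative_mul, Function.iterate_succ_apply', symbolApply_C_mul_X_pow]

lemma derivativeSymbol_mul (A P : R[X][X]) :
    derivativeSymbol (A * P) = coeffDerivative A * P + A * derivativeSymbol P := by
  simp only [derivativeSymbol, Derivation.leibniz, smul_eq_mul]; ring

lemma symbolApply_X_pow_natTrailingDegree (P : R[X][X]) :
    symbolApply (X ^ P.natTrailingDegree) P =
      P.trailingCoeff * (P.natTrailingDegree.factorial : R[X]) := by
  rw [symbolApply, lsum_apply, sum_def]
  by_cases hP : P = 0
  · simp [hP]
  rw [Finset.sum_eq_single_of_mem _ (natTrailingDegree_mem_support_of_nonzero hP)]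
  · simp [iterate_derivative_X_pow_eq_smul, trailingCoeff, Nat.descFactorial_self, smul_eq_C_mul,
      mul_comm]
  · intro k hk hne
    have hlt := lt_of_le_of_ne (natTrailingDegree_le_of_mem_supp k hk) hne.symm
    simp [iterate_derivative_X_pow_eq_smul, Nat.descFactorial_eq_zero_iff_lt.2 hlt]

lemma eq_zero_of_forall_symbolApply_eq_zero [NoZeroDivisors R] [CharZero R] {P : R[X][X]}
    (h : ∀ p, symbolApply p P = 0) : P = 0 := by
  by_contra hP
  have hX := h (X ^ P.natTrailingDegree)
  rw [symbolApply_X_pow_natTrailingDegree, mul_eq_zero, trailingCoeff_eq_zero] at hX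
  exact hX.elim hP (Nat.cast_ne_zero.2 (Nat.factorial_ne_zero _))

lemma eq_of_forall_symbolApply_eq [NoZeroDivisors R] [CharZero R] {P Q : R[X][X]}
    (h : ∀ p, symbolApply p P = symbolApply p Q) : P = Q :=
  sub_eq_zero.1 <| eq_zero_of_forall_symbolApply_eq_zero fun p => by rw [map_sub, h, sub_self]

end OperatorSymbol

lemma descPochhammer_succ_eval_add_one {R : Type*} [CommRing R] (t : ℕ) (x : R) :
    (descPochhammer R (t + 1)).eval (x + 1) = (x + 1) * (descPochhammer R t).eval x := by
  simp [descPochhammer_succ_left]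

section LaguerreCoeff

variable (α : ℝ)

-- The guard matters: for `k > n` the closed formula has `n - k = 0` and is not zero.
noncomputable def laguerreCoeff (n k : ℕ) : ℝ :=
  if k ≤ n then
    (descPochhammer ℝ (n - k)).eval (n + α) / (n - k).factorial * (-1) ^ k / k.factorial
  else 0

lemma coeff_Laguerre (n k : ℕ) : (Laguerre α n).coeff k = laguerreCoeff α n k := by
  simp only [Laguerre, laguerreCoeff, finsetSum_coeff, coeff_C_mul_X_pow,
    descPochhammer_eval_eq_prod_range, Finset.sum_ite_eq, Finset.mem_range, Nat.lt_succ_iff]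

lemma laguerreCoeff_succ_right (n k : ℕ) :
    (k + 1) * (k + 1 + α) * laguerreCoeff α n (k + 1) = (k - n) * laguerreCoeff α n k := by
  rcases lt_trichotomy k n with hk | rfl | hk
  · obtain ⟨t, rfl⟩ := Nat.exists_eq_add_of_lt hk
    simp only [laguerreCoeff, if_pos hk.le, if_pos (show k + 1 ≤ k + t + 1 by omega),
      show k + t + 1 - (k + 1) = t by omega, show k + t + 1 - k = t + 1 by omega,
      descPochhammer_succ_eval, Nat.factorial_succ]
    push_cast
    field_simp
    ring
  · simp [laguerreCoeff]
  · simp [laguerreCoeff, hk.not_ge, (hk.trans (Nat.lt_succ_self k)).not_ge]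

lemma laguerreCoeff_succ_zero (n : ℕ) :
    (n + 1) * laguerreCoeff α (n + 1) 0 = (n + α + 1) * laguerreCoeff α n 0 := by
  simp only [laguerreCoeff, zero_le, if_true, Nat.sub_zero, Nat.cast_succ,
    add_right_comm _ (1 : ℝ) α, descPochhammer_succ_eval_add_one, Nat.factorial_succ]
  push_cast
  field_simp

lemma laguerreCoeff_succ_succ (n k : ℕ) :
    (n + 1) * laguerreCoeff α (n + 1) (k + 1) =
      (k + 1 + (n + α + 1)) * laguerreCoeff α n (k + 1) - laguerreCoeff α n k := by
  rcases lt_trichotomy k n with hk | rfl | hk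
  · obtain ⟨t, rfl⟩ := Nat.exists_eq_add_of_lt hk
    simp only [laguerreCoeff, if_pos hk.le, if_pos (show k + 1 ≤ k + t + 1 by omega),
      if_pos (show k + 1 ≤ k + t + 1 + 1 by omega), show k + t + 1 - (k + 1) = t by omega,
      show k + t + 1 - k = t + 1 by omega, show k + t + 1 + 1 - (k + 1) = t + 1 by omega,
      Nat.cast_succ (k + t + 1), Nat.factorial_succ]
    rw [add_right_comm _ 1 α, descPochhammer_succ_eval_add_one, descPochhammer_succ_eval]
    push_cast
    field_simp
    ring
  · simp only [laguerreCoeff, le_refl, if_true, if_neg (show ¬ k + 1 ≤ k by omega),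
      Nat.sub_self, descPochhammer_zero, eval_one, Nat.factorial_zero, Nat.factorial_succ]
    push_cast
    field_simp
    ring
  · simp [laguerreCoeff, hk.not_ge, (hk.trans (Nat.lt_succ_self k)).not_ge,
      show ¬ k + 1 ≤ n + 1 by omega]

lemma Laguerre_ode (n : ℕ) :
    X * derivative (derivative (Laguerre α n)) + (C (α + 1) - X) * derivative (Laguerre α n) +
      C (n : ℝ) * Laguerre α n = 0 := by
  ext (_ | k)
  · simp only [sub_mul, coeff_add, coeff_sub, mul_coeff_zero, coeff_C_zero, coeff_X_zero,
      coeff_derivative, coeff_Laguerre, coeff_zero]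
    push_cast
    linear_combination laguerreCoeff_succ_right α n 0
  · simp only [add_mul, sub_mul, coeff_add, coeff_sub, coeff_C_mul, coeff_X_mul, coeff_derivative,
      coeff_Laguerre, coeff_zero]
    have h := laguerreCoeff_succ_right α n (k + 1)
    push_cast at h ⊢
    linear_combination h

lemma Laguerre_succ (n : ℕ) :
    C ((n : ℝ) + 1) * Laguerre α (n + 1) =
      X * derivative (Laguerre α n) + (C ((n : ℝ) + α + 1) - X) * Laguerre α n := by
  ext (_ | k)
  · simp only [sub_mul, coeff_add, coeff_sub, mul_coeff_zero, coeff_C_zero, coeff_X_zero,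
      coeff_Laguerre]
    linear_combination laguerreCoeff_succ_zero α n
  · simp only [add_mul, sub_mul, coeff_add, coeff_sub, coeff_C_mul, coeff_X_mul, coeff_derivative,
      coeff_Laguerre]
    linear_combination laguerreCoeff_succ_succ α n k

end LaguerreCoeff

section LaguerreSymbol

variable (α : ℝ)

noncomputable def laguerreDeltaSymbol (P : ℝ[X][X]) : ℝ[X][X] :=
  C (X - C (α + 1)) * derivativeSymbol P - C X * derivativeSymbol (derivativeSymbol P)

lemma symbolApply_laguerreDeltaSymbol (p : ℝ[X]) (P : ℝ[X][X]) :
    symbolApply p (laguerreDeltaSymbol α P) = laguerreDelta α (symbolApply p P) := by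
  rw [laguerreDeltaSymbol, map_sub, symbolApply_C_mul, symbolApply_C_mul, laguerreDelta,
    derivative_symbolApply, derivative_symbolApply]

noncomputable def laguerreDeltaFallingSymbol (m : ℕ) : ℝ[X][X] :=
  C (C ((m.factorial : ℝ) * (-1) ^ m)) * X ^ m * aeval (C X - C X * X) (Laguerre α m)

lemma derivativeSymbol_aeval (Q : ℝ[X]) :
    derivativeSymbol (aeval (C X - C X * X : ℝ[X][X]) Q) =
      (1 - X) * aeval (C X - C X * X) (derivative Q) + X * aeval (C X - C X * X) Q := by
  simp only [derivativeSymbol, Derivation.map_aeval, map_sub, Derivation.leibniz, coeffDerivative_C,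
    coeffDerivative_X, derivative_X, map_one, smul_eq_mul]
  ring

lemma laguerreDeltaFallingSymbol_succ (m : ℕ) :
    laguerreDeltaFallingSymbol α (m + 1) =
      laguerreDeltaSymbol α (laguerreDeltaFallingSymbol α m) -
        C (C (m : ℝ)) * laguerreDeltaFallingSymbol α m := by
  have hode := congrArg (aeval (C X - C X * X : ℝ[X][X])) (Laguerre_ode α m)
  have hrec := congrArg (aeval (C X - C X * X : ℝ[X][X])) (Laguerre_succ α m)
  simp only [map_add, map_mul, map_sub, aeval_X, aeval_C, map_zero, map_one, map_natCast,
    Polynomial.algebraMap_apply, algebraMap_eq] at hode hrec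
  simp only [laguerreDeltaFallingSymbol, laguerreDeltaSymbol, map_mul, map_natCast, map_pow, map_neg,
    map_one, map_add, map_sub, derivativeSymbol_add, derivativeSymbol_mul, derivativeSymbol_aeval,
    Derivation.leibniz, Derivation.leibniz_pow, Derivation.map_one_eq_zero, Derivation.map_natCast,
    coeffDerivative_X, smul_eq_mul, nsmul_zero, mul_zero, neg_zero, add_zero, zero_mul, zero_add,
    sub_self]
  rw [Nat.factorial_succ]
  push_cast
  linear_combination ((m.factorial : ℝ[X][X]) * (-1) ^ m * X ^ m * (1 - X)) * hode -
    ((m.factorial : ℝ[X][X]) * (-1) ^ m * X ^ (m + 1)) * hrec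

lemma laguerreDeltaFalling_eq_symbolApply (m : ℕ) (p : ℝ[X]) :
    laguerreDeltaFalling α m p = symbolApply p (laguerreDeltaFallingSymbol α m) := by
  induction m with
  | zero => simp [laguerreDeltaFalling, laguerreDeltaFallingSymbol, Laguerre, symbolApply_one]
  | succ m ih =>
    rw [laguerreDeltaFalling, ih, laguerreDeltaFallingSymbol_succ, map_sub,
      symbolApply_laguerreDeltaSymbol, symbolApply_C_mul, smul_eq_C_mul]

end LaguerreSymbol

theorem deltaFalling_symbol_general (α : ℝ) (n : ℕ) (q : ℕ → Polynomial ℝ)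
    (hq : ∀ p : Polynomial ℝ,
      laguerreDeltaFalling α n p = ∑ k ∈ Finset.Icc n (2 * n), q k * derivative^[k] p) :
    ∑ k ∈ Finset.Icc n (2 * n), (Polynomial.C (q k)) * (X : Polynomial (Polynomial ℝ)) ^ k =
      Polynomial.C (Polynomial.C ((Nat.factorial n : ℝ) * (-1) ^ n)) *
        (X : Polynomial (Polynomial ℝ)) ^ n *
        Polynomial.aeval (Polynomial.C (X : Polynomial ℝ) -
          Polynomial.C (X : Polynomial ℝ) * X) (Laguerre α n) := by
  change _ = laguerreDeltaFallingSymbol α n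
  refine eq_of_forall_symbolApply_eq fun p => ?_
  simp only [map_sum, symbolApply_C_mul_X_pow, ← hq, laguerreDeltaFalling_eq_symbolApply]

/-- If `δ(δ-1)⋯(δ-(n-1)) = ∑_{k=n}^{2n} q_k(x) D^k` as operators on `ℝ[x]`, then
`∑_{k=n}^{2n} q_k(x) z^k = n! (-1)^n z^n L_n^{(α)}(x - xz)` as a polynomial in `x` and `z`
(here the outer variable is `z`, with coefficients polynomials in `x`). -/
theorem deltaFalling_symbol (α : ℝ) (n : ℕ) (hn : 1 ≤ n) (q : ℕ → Polynomial ℝ)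
    (hq : ∀ p : Polynomial ℝ,
      laguerreDeltaFalling α n p = ∑ k ∈ Finset.Icc n (2 * n), q k * derivative^[k] p) :
    ∑ k ∈ Finset.Icc n (2 * n), (Polynomial.C (q k)) * (X : Polynomial (Polynomial ℝ)) ^ k =
      Polynomial.C (Polynomial.C ((Nat.factorial n : ℝ) * (-1) ^ n)) *
        (X : Polynomial (Polynomial ℝ)) ^ n *
        Polynomial.aeval (Polynomial.C (X : Polynomial ℝ) -
          Polynomial.C (X : Polynomial ℝ) * X) (Laguerre α n) :=
  deltaFalling_symbol_general α n q hq
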